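/- arXiv:2207.14239 — 6 statements merged into one kernel-verified Lean document; each statement's English description precedes it below -/
import Mathlib

section
/- Let E be a measurable relation on a measurable space (Ω,F) (i.e., E ∈ F ⊗ F as a subset of Ω × Ω). Then E** = E if and only if E is an equivalence relation. -/
open MeasureTheory

/-- For a relation `E` on `Ω`, the collection `E* = {A measurable : ∀ (ω,ω') ∈ E, ω ∈ A ↔ ω' ∈ A}`. -/
def Estar {Ω : Type*} [MeasurableSpace Ω] (E : Set (Ω × Ω)) : Set (Set Ω) :=
  {A | MeasurableSet A ∧ ∀ p ∈ E, p.1 ∈ A ↔ p.2 ∈ A}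

/-- For a collection `G` of subsets of `Ω`, the relation `G* = {(ω,ω') : ∀ A ∈ G, ω ∈ A ↔ ω' ∈ A}`. -/
def Gstar {Ω : Type*} (G : Set (Set Ω)) : Set (Ω × Ω) :=
  {p | ∀ A ∈ G, p.1 ∈ A ↔ p.2 ∈ A}

/-- `Q` is a coupling of `P` and `P'`. -/
def IsCoupling {Ω : Type*} [MeasurableSpace Ω] (Q : Measure (Ω × Ω)) (P P' : Measure Ω) : Prop :=
  IsProbabilityMeasure Q ∧ Q.map Prod.fst = P ∧ Q.map Prod.snd = P'

/-- The pair `(E, G)` satisfies strong duality: for all probability measures `P, P'`,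
`sup_{A ∈ G} |P(A) - P'(A)| = min_{Q ∈ Γ(P,P')} (1 - Q(E))`, the minimum being attained. -/
def StrongDualityPair {Ω : Type*} [MeasurableSpace Ω] (E : Set (Ω × Ω)) (G : Set (Set Ω)) : Prop :=
  ∀ P P' : Measure Ω, IsProbabilityMeasure P → IsProbabilityMeasure P' →
    ∃ Q : Measure (Ω × Ω), IsCoupling Q P P' ∧
      (⨆ A : G, |(P A.1).toReal - (P' A.1).toReal|) = 1 - (Q E).toReal ∧
      ∀ Q' : Measure (Ω × Ω), IsCoupling Q' P P' → Q' E ≤ Q E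

/-- for a measurable relation `E`, `E** = E` iff `E` is an equivalence relation. -/
theorem stmt3 {Ω : Type*} [MeasurableSpace Ω] (E : Set (Ω × Ω))
    (hE : MeasurableSet E) :
    Gstar (Estar E) = E ↔ Equivalence (fun ω ω' : Ω => (ω, ω') ∈ E) := by
  constructor
  · intro h
    rw [← h]
    exact ⟨fun ω A _ => Iff.rfl,
      fun {x y} hxy A hA => (hxy A hA).symm,
      fun {x y z} hxy hyz A hA => (hxy A hA).trans (hyz A hA)⟩
  · intro hEq
    ext ⟨ω, ω'⟩
    constructor
    · intro h
      have hA : ({x | (ω, x) ∈ E}) ∈ Estar E := by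
        refine ⟨measurable_prodMk_left hE, ?_⟩
        rintro ⟨a, b⟩ hab
        exact ⟨fun ha => hEq.trans ha hab, fun hb => hEq.trans hb (hEq.symm hab)⟩
      exact (h _ hA).mp (hEq.refl ω)
    · intro h A hA
      exact hA.2 _ h
end

section
/- Let Ω be an uncountable set, F the σ-algebra of all subsets of Ω, and G the σ-algebra of countable/co-countable subsets of Ω. Then G* equals the diagonal Δ = {(ω,ω) : ω ∈ Ω}, and G** = F, so G** strictly contains G. -/
open MeasureTheory

lemma stmt5_aux {Ω : Type*} (hΩ : ¬ (Set.univ : Set Ω).Countable) :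
    letI : MeasurableSpace Ω := ⊤
    Gstar {A : Set Ω | A.Countable ∨ Aᶜ.Countable} = {p : Ω × Ω | p.1 = p.2} ∧
    Estar (Gstar {A : Set Ω | A.Countable ∨ Aᶜ.Countable}) = (Set.univ : Set (Set Ω)) ∧
    {A : Set Ω | A.Countable ∨ Aᶜ.Countable} ⊆ Estar (Gstar {A : Set Ω | A.Countable ∨ Aᶜ.Countable}) ∧
    {A : Set Ω | A.Countable ∨ Aᶜ.Countable} ≠ Estar (Gstar {A : Set Ω | A.Countable ∨ Aᶜ.Countable}) := by
  letI : MeasurableSpace Ω := ⊤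
  set G : Set (Set Ω) := {A : Set Ω | A.Countable ∨ Aᶜ.Countable} with hGdef
  have hGstar : Gstar G = {p : Ω × Ω | p.1 = p.2} := by
    ext ⟨a, b⟩
    constructor
    · intro h
      have := h {a} (Or.inl (Set.countable_singleton a))
      exact ((by simpa using this : b = a)).symm
    · rintro (h : a = b)
      subst h
      intro A _; rfl
  have hEstar : Estar (Gstar G) = (Set.univ : Set (Set Ω)) := by
    ext A
    simp only [Set.mem_univ, iff_true, Estar, Set.mem_setOf_eq]
    refine ⟨trivial, ?_⟩
    rintro ⟨a, b⟩ hp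
    rw [hGstar] at hp
    simp only [Set.mem_setOf_eq] at hp
    subst hp; rfl
  refine ⟨hGstar, hEstar, ?_, ?_⟩
  · rw [hEstar]; exact Set.subset_univ _
  · rw [hEstar]
    intro h
    -- find a set that is neither countable nor co-countable
    have hnc : Uncountable Ω := by
      rw [Set.countable_univ_iff, ← not_uncountable_iff] at hΩ
      exact not_not.mp hΩ
    have hinf : Cardinal.aleph0 ≤ Cardinal.mk Ω := by
      rw [Cardinal.infinite_iff.symm]
      infer_instance
    have hcard : (Cardinal.mk Ω) + (Cardinal.mk Ω) = Cardinal.mk Ω := by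
      simpa using Cardinal.add_eq_self hinf
    obtain ⟨e⟩ := Cardinal.eq.mp (by rw [Cardinal.mk_sum]; simpa using hcard :
      Cardinal.mk (Ω ⊕ Ω) = Cardinal.mk Ω)
    set A : Set Ω := Set.range (fun ω => e (Sum.inl ω)) with hA
    have hmem : A ∈ G := h ▸ Set.mem_univ A
    have hinj1 : Function.Injective (fun ω : Ω => e (Sum.inl ω)) :=
      e.injective.comp Sum.inl_injective
    have hinj2 : Function.Injective (fun ω : Ω => e (Sum.inr ω)) :=
      e.injective.comp Sum.inr_injective
    have hcompl : Aᶜ = Set.range (fun ω => e (Sum.inr ω)) := by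
      ext x
      obtain ⟨y, rfl⟩ := e.surjective x
      cases y with
      | inl a => simp [hA, e.injective.eq_iff]
      | inr a => simp [hA, e.injective.eq_iff]
    rcases hmem with hc | hc
    · refine hΩ ((hc.preimage hinj1).mono ?_)
      intro x _
      exact Set.mem_preimage.mpr ⟨x, rfl⟩
    · rw [hcompl] at hc
      exact hΩ ((hc.preimage hinj2).mono (by intro x _; exact Set.mem_preimage.mpr ⟨x, rfl⟩))

/-- on an uncountable set with the discrete σ-algebra, the countable/co-countable
σ-algebra `G` has `G*` equal to the diagonal, `G** = F` (all subsets), so `G** ⊋ G`. -/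
theorem stmt5 {Ω : Type*} (hΩ : ¬ (Set.univ : Set Ω).Countable) :
    letI : MeasurableSpace Ω := ⊤
    let G : Set (Set Ω) := {A | A.Countable ∨ Aᶜ.Countable}
    Gstar G = {p : Ω × Ω | p.1 = p.2} ∧
    Estar (Gstar G) = (Set.univ : Set (Set Ω)) ∧
    G ⊆ Estar (Gstar G) ∧ G ≠ Estar (Gstar G) := by
  exact stmt5_aux hΩ
end

section
/- Weak duality characterization: let E be a measurable relation on (Ω,F) and G ⊆ F with Ω ∈ G. Then the inequality sup_{A∈G} |P(A) − P'(A)| ≤ inf_{Q ∈ Γ(P,P')} (1 − Q(E)) holds for all probability measures P, P' on (Ω,F) if and only if G ⊆ E* (equivalently E ⊆ G*). -/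
open MeasureTheory

/-- weak duality characterization. For a measurable relation `E` and `G ⊆ F`
with `Ω ∈ G`, the weak duality inequality holds for all probability measures `P, P'`
(equivalently: `|P(A) - P'(A)| ≤ 1 - Q(E)` for all `A ∈ G` and couplings `Q`)
if and only if `G ⊆ E*` (equivalently `E ⊆ G*`). -/
theorem stmt6 {Ω : Type*} [MeasurableSpace Ω] (E : Set (Ω × Ω)) (G : Set (Set Ω))
    (hE : MeasurableSet E) (hG : ∀ A ∈ G, MeasurableSet A) (hΩG : Set.univ ∈ G) :
    (∀ P P' : Measure Ω, IsProbabilityMeasure P → IsProbabilityMeasure P' →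
      ∀ Q : Measure (Ω × Ω), IsCoupling Q P P' →
        ∀ A ∈ G, |(P A).toReal - (P' A).toReal| ≤ 1 - (Q E).toReal) ↔
    (G ⊆ Estar E ∧ E ⊆ Gstar G) := by
  constructor
  · intro h
    have key : ∀ A ∈ G, ∀ p ∈ E, p.1 ∈ A ↔ p.2 ∈ A := by
      rintro A hA ⟨ω, ω'⟩ hp
      have hQ : IsCoupling (Measure.dirac (ω, ω')) (Measure.dirac ω) (Measure.dirac ω') := by
        refine ⟨inferInstance, ?_, ?_⟩
        · rw [Measure.map_dirac' measurable_fst]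
        · rw [Measure.map_dirac' measurable_snd]
      have hle := h _ _ inferInstance inferInstance _ hQ A hA
      have hQE : (Measure.dirac (ω, ω')) E = 1 := by
        rw [Measure.dirac_apply' _ hE]; simp [hp]
      have hAm := hG A hA
      rw [hQE, Measure.dirac_apply' _ hAm, Measure.dirac_apply' _ hAm] at hle
      by_cases h1 : ω ∈ A <;> by_cases h2 : ω' ∈ A <;>
        simp [h1, h2, Set.indicator] at hle ⊢ <;> linarith
    exact ⟨fun A hA => ⟨hG A hA, key A hA⟩, fun p hp A hA => key A hA p hp⟩
  · rintro ⟨hGE, -⟩ P P' hP hP' Q ⟨hQprob, hQ1, hQ2⟩ A hA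
    have hAm := hG A hA
    have hF1 : P A = Q (Prod.fst ⁻¹' A) := by
      rw [← hQ1, Measure.map_apply measurable_fst hAm]
    have hF2 : P' A = Q (Prod.snd ⁻¹' A) := by
      rw [← hQ2, Measure.map_apply measurable_snd hAm]
    have hiff := (hGE hA).2
    have hsub1 : Prod.fst ⁻¹' A ⊆ Prod.snd ⁻¹' A ∪ Eᶜ := by
      intro p hp
      by_cases hpE : p ∈ E
      · exact Or.inl ((hiff p hpE).mp hp)
      · exact Or.inr hpE
    have hsub2 : Prod.snd ⁻¹' A ⊆ Prod.fst ⁻¹' A ∪ Eᶜ := by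
      intro p hp
      by_cases hpE : p ∈ E
      · exact Or.inl ((hiff p hpE).mpr hp)
      · exact Or.inr hpE
    have hc : Q Eᶜ = 1 - Q E := by
      rw [measure_compl hE (measure_ne_top Q E), measure_univ]
    have hzle : Q E ≤ 1 := prob_le_one
    have ha : Q (Prod.fst ⁻¹' A) ≤ Q (Prod.snd ⁻¹' A) + Q Eᶜ :=
      (measure_mono hsub1).trans (measure_union_le _ _)
    have hb : Q (Prod.snd ⁻¹' A) ≤ Q (Prod.fst ⁻¹' A) + Q Eᶜ :=
      (measure_mono hsub2).trans (measure_union_le _ _)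
    have hcr : (Q Eᶜ).toReal = 1 - (Q E).toReal := by
      rw [hc, ENNReal.toReal_sub_of_le hzle ENNReal.one_ne_top, ENNReal.toReal_one]
    have har : (Q (Prod.fst ⁻¹' A)).toReal ≤ (Q (Prod.snd ⁻¹' A)).toReal + (Q Eᶜ).toReal := by
      rw [← ENNReal.toReal_add (measure_ne_top _ _) (measure_ne_top _ _)]
      exact ENNReal.toReal_mono (by finiteness) ha
    have hbr : (Q (Prod.snd ⁻¹' A)).toReal ≤ (Q (Prod.fst ⁻¹' A)).toReal + (Q Eᶜ).toReal := by
      rw [← ENNReal.toReal_add (measure_ne_top _ _) (measure_ne_top _ _)]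
      exact ENNReal.toReal_mono (by finiteness) hb
    rw [hF1, hF2, abs_sub_le_iff]
    constructor <;> linarith
end

section
/- On a Polish space, every smooth equivalence relation is basic: if E is an equivalence relation on a Polish space Ω induced by a Borel map φ : Ω → X into a standard Borel space X (i.e., (ω,ω') ∈ E iff φ(ω) = φ(ω')), then E ∈ E* ⊗ E*. -/
open MeasureTheory

/-- on a Polish space, every smooth equivalence relation is basic: if `E` is
induced by a Borel map `φ : Ω → X` into a standard Borel space, then `E ∈ E* ⊗ E*`. -/
theorem stmt12 {Ω X : Type*} [TopologicalSpace Ω] [PolishSpace Ω]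
    [MeasurableSpace Ω] [BorelSpace Ω] [MeasurableSpace X] [StandardBorelSpace X]
    (φ : Ω → X) (hφ : Measurable φ) (E : Set (Ω × Ω))
    (hE : ∀ ω ω' : Ω, (ω, ω') ∈ E ↔ φ ω = φ ω') :
    @MeasurableSet (Ω × Ω)
      ((MeasurableSpace.generateFrom (Estar E)).prod (MeasurableSpace.generateFrom (Estar E))) E := by
  letI := upgradeStandardBorel X
  set m := MeasurableSpace.generateFrom (Estar E)
  have hφm : @Measurable Ω X m _ φ := fun B hB =>
    MeasurableSpace.measurableSet_generateFrom
      ⟨hφ hB, fun p hp => by rw [Set.mem_preimage, Set.mem_preimage, (hE p.1 p.2).mp hp]⟩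
  have hmap : @Measurable (Ω × Ω) (X × X) (m.prod m) _ (fun p => (φ p.1, φ p.2)) :=
    Measurable.prodMk (hφm.comp measurable_fst) (hφm.comp measurable_snd)
  have hdiag : MeasurableSet (Set.diagonal X) := isClosed_diagonal.measurableSet
  have hEeq : E = (fun p : Ω × Ω => (φ p.1, φ p.2)) ⁻¹' Set.diagonal X := by
    ext ⟨a, b⟩
    simp [Set.diagonal, hE a b]
  rw [hEeq]
  exact hmap hdiag
end

section
/- A countable increasing union of strongly dualizable equivalence relations is strongly dualizable: if (E_n) is a nondecreasing sequence of equivalence relations on (Ω,F), each strongly dualizable, then E := ⋃_n E_n satisfies sup_{A∈E*}|P(A) − P'(A)| = min_{Q∈Γ(P,P')}(1 − Q(E)) for all probability measures P,P', with the minimum attained. -/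
set_option maxHeartbeats 2000000


open MeasureTheory

open MeasureTheory Set Filter Topology

namespace Stmt14
variable {Ω : Type*} [MeasurableSpace Ω]

lemma Estar_anti {E F : Set (Ω × Ω)} (h : E ⊆ F) : Estar F ⊆ Estar E :=
  fun _ hA => ⟨hA.1, fun p hp => hA.2 p (h hp)⟩

lemma empty_mem_Estar (E : Set (Ω × Ω)) : ∅ ∈ Estar E :=
  ⟨MeasurableSet.empty, fun _ _ => Iff.rfl⟩

instance (E : Set (Ω × Ω)) : Nonempty (Estar E) := ⟨⟨∅, empty_mem_Estar E⟩⟩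

lemma compl_mem_Estar {E : Set (Ω × Ω)} {A : Set Ω} (hA : A ∈ Estar E) : Aᶜ ∈ Estar E :=
  ⟨hA.1.compl, fun p hp => not_iff_not.2 (hA.2 p hp)⟩

lemma Estar_iUnion_mem {E : ℕ → Set (Ω × Ω)} {A : Set Ω} :
    A ∈ Estar (⋃ n, E n) ↔ MeasurableSet A ∧ ∀ n, ∀ p ∈ E n, p.1 ∈ A ↔ p.2 ∈ A := by
  constructor
  · exact fun h => ⟨h.1, fun n p hp => h.2 p (Set.mem_iUnion.2 ⟨n, hp⟩)⟩
  · rintro ⟨hm, h⟩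
    exact ⟨hm, fun p hp => by rcases Set.mem_iUnion.1 hp with ⟨n, hn⟩; exact h n p hn⟩

/-- the σ-algebra of `E`-invariant measurable sets -/
def mstar (E : Set (Ω × Ω)) : MeasurableSpace Ω where
  MeasurableSet' A := A ∈ Estar E
  measurableSet_empty := empty_mem_Estar E
  measurableSet_compl _ h := compl_mem_Estar h
  measurableSet_iUnion g hg := by
    refine ⟨MeasurableSet.iUnion fun n => (hg n).1, fun p hp => ?_⟩
    simp only [Set.mem_iUnion]
    exact exists_congr fun n => (hg n).2 p hp

lemma mstar_le (E : Set (Ω × Ω)) : mstar E ≤ ‹MeasurableSpace Ω› := fun A hA => hA.1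

@[simp] lemma measurableSet_mstar {E : Set (Ω × Ω)} {A : Set Ω} :
    MeasurableSet[mstar E] A ↔ A ∈ Estar E := Iff.rfl

lemma mstar_antitone {E : ℕ → Set (Ω × Ω)} (h : Monotone E) : Antitone (fun n => mstar (E n)) :=
  fun _ _ hnk A hA => Estar_anti (h hnk) hA

/-- upper bound: any coupling satisfies `|P A - P' A| ≤ 1 - Q Eu` for `A ∈ Estar Eu`. -/
lemma coupling_bound {P P' : Measure Ω} {Q : Measure (Ω × Ω)} (hQ : IsCoupling Q P P')
    {Eu : Set (Ω × Ω)} (hE : MeasurableSet Eu) {A : Set Ω} (hA : A ∈ Estar Eu) :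
    |(P A).toReal - (P' A).toReal| ≤ 1 - (Q Eu).toReal := by
  obtain ⟨hQp, h1, h2⟩ := hQ
  have hPA : P A = Q (Prod.fst ⁻¹' A) := by rw [← h1, Measure.map_apply measurable_fst hA.1]
  have hP'A : P' A = Q (Prod.snd ⁻¹' A) := by rw [← h2, Measure.map_apply measurable_snd hA.1]
  have hsub1 : Prod.fst ⁻¹' A ⊆ (Prod.snd ⁻¹' A) ∪ Euᶜ := by
    intro p hp
    by_cases hpE : p ∈ Eu
    · exact Or.inl ((hA.2 p hpE).1 hp)
    · exact Or.inr hpE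
  have hsub2 : Prod.snd ⁻¹' A ⊆ (Prod.fst ⁻¹' A) ∪ Euᶜ := by
    intro p hp
    by_cases hpE : p ∈ Eu
    · exact Or.inl ((hA.2 p hpE).2 hp)
    · exact Or.inr hpE
  have hco : (Q Euᶜ).toReal = 1 - (Q Eu).toReal := by
    rw [measure_compl hE (measure_ne_top Q Eu), measure_univ]
    rw [ENNReal.toReal_sub_of_le prob_le_one ENNReal.one_ne_top, ENNReal.toReal_one]
  have key : ∀ s t : Set (Ω × Ω), s ⊆ t ∪ Euᶜ → (Q s).toReal - (Q t).toReal ≤ (Q Euᶜ).toReal := by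
    intro s t hst
    have h1' : Q s ≤ Q t + Q Euᶜ := le_trans (measure_mono hst) (measure_union_le _ _)
    have := ENNReal.toReal_mono (by finiteness) h1'
    rw [ENNReal.toReal_add (measure_ne_top _ _) (measure_ne_top _ _)] at this
    linarith
  rw [hPA, hP'A, ← hco]
  rw [abs_sub_le_iff]
  exact ⟨key _ _ hsub1, key _ _ hsub2⟩

end Stmt14

open MeasureTheory Filter Topology

lemma tendsto_orthogonalProjection_of_antitone
    {H : Type*} [NormedAddCommGroup H] [InnerProductSpace ℝ H] [CompleteSpace H]
    (V : ℕ → Submodule ℝ H) [∀ n, (V n).HasOrthogonalProjection] (hV : Antitone V) (x : H) :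
    ∃ y : H, Tendsto (fun n => ((V n).orthogonalProjectionOnto x : H)) atTop (𝓝 y) ∧
      (∀ n, y ∈ V n) ∧ ∀ z ∈ (⨅ n, V n), inner (𝕜 := ℝ) (x - y) z = 0 := by
  set U : ℕ → Submodule ℝ H := fun n => (V n)ᗮ with hUdef
  have hU : Monotone U := fun a b hab => Submodule.orthogonal_le (hV hab)
  haveI : CompleteSpace ((⨆ n, U n).topologicalClosure) :=
    (Submodule.isClosed_topologicalClosure _).completeSpace_coe
  have hconv := Submodule.starProjection_tendsto_closure_iSup U hU x
  set W := (⨆ n, U n).topologicalClosure with hW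
  have hWorth : Wᗮ = ⨅ n, V n := by
    have h1 : Wᗮ = (⨆ n, U n)ᗮ := by
      rw [hW, ← Submodule.orthogonal_orthogonal_eq_closure, Submodule.triorthogonal_eq_orthogonal]
    rw [h1, ← Submodule.iInf_orthogonal]
    exact iInf_congr fun n => Submodule.orthogonal_orthogonal (V n)
  refine ⟨x - (W.orthogonalProjectionOnto x : H), ?_, ?_, ?_⟩
  · have heq : ∀ n, ((V n).orthogonalProjectionOnto x : H) = x - ((U n).orthogonalProjectionOnto x : H) := by
      intro n
      have h := Submodule.starProjection_add_starProjection_orthogonal (K := V n) x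
      have : ((U n).orthogonalProjectionOnto x : H) = ((V n)ᗮ.orthogonalProjectionOnto x : H) := rfl
      rw [this, eq_sub_iff_add_eq]
      exact h
    simp only [heq]
    exact tendsto_const_nhds.sub hconv
  · intro n
    have hmem : x - (W.orthogonalProjectionOnto x : H) ∈ Wᗮ := Submodule.sub_starProjection_mem_orthogonal x
    rw [hWorth] at hmem
    exact (Submodule.mem_iInf _).1 hmem n
  · intro z hz
    have hz' : z ∈ Wᗮ := by rw [hWorth]; exact hz
    have : x - (x - (W.orthogonalProjectionOnto x : H)) = (W.orthogonalProjectionOnto x : H) := by abel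
    rw [this]
    exact (Submodule.mem_orthogonal W z).1 hz' _ (SetLike.coe_mem _)

namespace Stmt14
open Filter Topology
variable {Ω : Type*} [MeasurableSpace Ω]

lemma toReal_compl {P : Measure Ω} [IsProbabilityMeasure P] {A : Set Ω} (hA : MeasurableSet A) :
    (P Aᶜ).toReal = 1 - (P A).toReal := by
  rw [prob_compl_eq_one_sub hA, ENNReal.toReal_sub_of_le prob_le_one ENNReal.one_ne_top,
    ENNReal.toReal_one]

/-- The analytic core: a sequence of bounds `σ n` for the `Estar (E n)`-suprema,
converging to a value attained by a set in `Estar (⋃ n, E n)`. -/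
lemma sigma_exists (E : ℕ → Set (Ω × Ω)) (hmono : Monotone E)
    (P P' : Measure Ω) [IsProbabilityMeasure P] [IsProbabilityMeasure P'] :
    ∃ σ : ℕ → ℝ, (∀ n, 0 ≤ σ n) ∧
      (∀ n, ∀ A ∈ Estar (E n), |(P A).toReal - (P' A).toReal| ≤ σ n) ∧
      ∃ slim : ℝ, Tendsto σ atTop (𝓝 slim) ∧
        ∃ Ainf ∈ Estar (⋃ n, E n), slim = (P Ainf).toReal - (P' Ainf).toReal := by
  classical
  set μ : Measure Ω := P + P' with hμdef
  have hPμ : P ≪ μ := by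
    intro s hs
    simp only [hμdef, Measure.add_apply, add_eq_zero] at hs
    exact hs.1
  have hP'μ : P' ≪ μ := by
    intro s hs
    simp only [hμdef, Measure.add_apply, add_eq_zero] at hs
    exact hs.2
  set f : Ω → ℝ := fun ω => (P.rnDeriv μ ω).toReal - (P'.rnDeriv μ ω).toReal with hfdef
  have hintP : Integrable (fun ω => (P.rnDeriv μ ω).toReal) μ := Measure.integrable_toReal_rnDeriv
  have hintP' : Integrable (fun ω => (P'.rnDeriv μ ω).toReal) μ := Measure.integrable_toReal_rnDeriv
  have hf_int : Integrable f μ := hintP.sub hintP'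
  have hsetf : ∀ A : Set Ω, MeasurableSet A →
      ∫ ω in A, f ω ∂μ = (P A).toReal - (P' A).toReal := by
    intro A hA
    rw [hfdef]
    rw [integral_sub hintP.integrableOn hintP'.integrableOn,
      Measure.setIntegral_toReal_rnDeriv hPμ A, Measure.setIntegral_toReal_rnDeriv hP'μ A]
    rfl
  -- `f` is square integrable
  have hf2 : MemLp f 2 μ := by
    refine MemLp.of_bound hf_int.aestronglyMeasurable 1 ?_
    have h1 := Measure.rnDeriv_le_one_of_le (Measure.le_add_right (le_refl P) : P ≤ μ)
    have h2 := Measure.rnDeriv_le_one_of_le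
      ((Measure.le_add_left (le_refl P') : P' ≤ μ))
    filter_upwards [h1, h2] with ω h1ω h2ω
    have e1 : (P.rnDeriv μ ω).toReal ≤ 1 := by
      simpa using ENNReal.toReal_mono ENNReal.one_ne_top h1ω
    have e2 : (P'.rnDeriv μ ω).toReal ≤ 1 := by
      simpa using ENNReal.toReal_mono ENNReal.one_ne_top h2ω
    have e3 : 0 ≤ (P.rnDeriv μ ω).toReal := ENNReal.toReal_nonneg
    have e4 : 0 ≤ (P'.rnDeriv μ ω).toReal := ENNReal.toReal_nonneg
    rw [hfdef, Real.norm_eq_abs, abs_le]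
    constructor <;> simp only [] <;> nlinarith
  set fL : Lp ℝ 2 μ := hf2.toLp f with hfL
  -- the decreasing family of subspaces
  haveI : Fact ((1:ENNReal) ≤ 2) := ⟨one_le_two⟩
  haveI hFact : ∀ n, Fact (mstar (E n) ≤ ‹MeasurableSpace Ω›) := fun n => ⟨mstar_le _⟩
  set V : ℕ → Submodule ℝ (Lp ℝ 2 μ) := fun n => lpMeas ℝ ℝ (mstar (E n)) 2 μ with hVdef
  have hVanti : Antitone V := by
    intro a b hab x hx
    rw [hVdef] at hx ⊢
    rw [mem_lpMeas_iff_aestronglyMeasurable] at hx ⊢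
    obtain ⟨g, hg, hgae⟩ := hx
    exact ⟨g, hg.mono (fun A hA => mstar_antitone hmono hab A hA), hgae⟩
  obtain ⟨y, hy_tendsto, hy_mem, hy_orth⟩ :=
    tendsto_orthogonalProjection_of_antitone V hVanti fL
  -- representatives of the projections
  set pn : ℕ → Lp ℝ 2 μ := fun n => ((V n).orthogonalProjectionOnto fL : Lp ℝ 2 μ) with hpn
  have hpn_meas : ∀ n, AEStronglyMeasurable[mstar (E n)] (pn n) μ := fun n =>
    mem_lpMeas_iff_aestronglyMeasurable.1 (SetLike.coe_mem _)
  set g : ℕ → Ω → ℝ := fun n => (hpn_meas n).mk (pn n) with hgdef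
  have hg_sm : ∀ n, StronglyMeasurable[mstar (E n)] (g n) := fun n =>
    (hpn_meas n).stronglyMeasurable_mk
  have hg_ae : ∀ n, (pn n : Ω → ℝ) =ᵐ[μ] g n := fun n => (hpn_meas n).ae_eq_mk
  have hpn_int : ∀ n, Integrable (pn n) μ := fun n => (Lp.memLp (pn n)).integrable one_le_two
  have hg_int : ∀ n, Integrable (g n) μ := fun n => (hpn_int n).congr (hg_ae n)
  -- set integrals of `f` and `g n` agree on `Estar (E n)`
  have horth : ∀ n, ∀ A ∈ Estar (E n), ∫ ω in A, f ω ∂μ = ∫ ω in A, g n ω ∂μ := by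
    intro n A hA
    have hAmeas : MeasurableSet A := hA.1
    set χ : Lp ℝ 2 μ := indicatorConstLp 2 hAmeas (measure_ne_top μ A) (1:ℝ) with hχ
    have hχV : χ ∈ V n := by
      rw [hVdef, mem_lpMeas_iff_aestronglyMeasurable]
      exact ⟨A.indicator (fun _ => (1:ℝ)),
        stronglyMeasurable_const.indicator (hA : MeasurableSet[mstar (E n)] A),
        indicatorConstLp_coeFn⟩
    have hsub : fL - pn n ∈ (V n)ᗮ := Submodule.sub_starProjection_mem_orthogonal fL
    have hzero : (inner ℝ χ (fL - pn n) : ℝ) = 0 :=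
      (Submodule.mem_orthogonal _ _).1 hsub χ hχV
    rw [L2.inner_indicatorConstLp_eq_setIntegral_inner ℝ (fL - pn n) hAmeas (1:ℝ)
      (measure_ne_top μ A)] at hzero
    simp only [RCLike.inner_apply, starRingEnd_apply, star_one, one_mul, mul_one] at hzero
    have hcoe : (((fL - pn n : Lp ℝ 2 μ)) : Ω → ℝ) =ᵐ[μ] fun ω => f ω - g n ω := by
      filter_upwards [Lp.coeFn_sub fL (pn n), hf2.coeFn_toLp, hg_ae n] with ω h1 h2 h3
      rw [h1]
      simp only [Pi.sub_apply]
      rw [h2, ← h3]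
    rw [setIntegral_congr_ae hAmeas (hcoe.mono fun ω h _ => h)] at hzero
    rw [integral_sub (hf_int.integrableOn) ((hg_int n).integrableOn)] at hzero
    linarith
  -- the bounds `σ n`
  set σfun : ℕ → ℝ := fun n => ∫ ω, max (g n ω) 0 ∂μ with hσdef
  have hbound : ∀ n, ∀ A ∈ Estar (E n), (P A).toReal - (P' A).toReal ≤ σfun n := by
    intro n A hA
    rw [← hsetf A hA.1, horth n A hA]
    calc ∫ ω in A, g n ω ∂μ ≤ ∫ ω in A, max (g n ω) 0 ∂μ :=
          setIntegral_mono (hg_int n).integrableOn (hg_int n).pos_part.integrableOn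
            (fun ω => le_max_left _ _)
      _ ≤ ∫ ω, max (g n ω) 0 ∂μ :=
          setIntegral_le_integral (hg_int n).pos_part (ae_of_all _ fun ω => le_max_right _ _)
  have habs : ∀ n, ∀ A ∈ Estar (E n), |(P A).toReal - (P' A).toReal| ≤ σfun n := by
    intro n A hA
    rw [abs_le]
    refine ⟨?_, hbound n A hA⟩
    have h2 := hbound n Aᶜ (compl_mem_Estar hA)
    rw [toReal_compl hA.1, toReal_compl hA.1] at h2
    linarith
  -- representatives of the limit
  have hy_meas : ∀ n, AEStronglyMeasurable[mstar (E n)] (y : Ω → ℝ) μ := fun n =>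
    mem_lpMeas_iff_aestronglyMeasurable.1 (hy_mem n)
  set g' : ℕ → Ω → ℝ := fun n => (hy_meas n).mk _ with hg'def
  have hg'_sm : ∀ n, StronglyMeasurable[mstar (E n)] (g' n) := fun n =>
    (hy_meas n).stronglyMeasurable_mk
  have hg'_ae : ∀ n, (y : Ω → ℝ) =ᵐ[μ] g' n := fun n => (hy_meas n).ae_eq_mk
  have hy_int : Integrable (y : Ω → ℝ) μ := (Lp.memLp y).integrable one_le_two
  have hg'_int : ∀ n, Integrable (g' n) μ := fun n => hy_int.congr (hg'_ae n)
  set S : ℕ → Set Ω := fun j => {ω | 0 < g' j ω} with hSdef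
  have hS : ∀ j, MeasurableSet[mstar (E j)] (S j) := fun j =>
    (hg'_sm j).measurable measurableSet_Ioi
  set Y : ℕ → Set Ω := fun k => ⋃ j, S (k + j) with hYdef
  have hYanti : ∀ k k', k ≤ k' → Y k' ⊆ Y k := by
    intro k k' hkk' x hx
    rw [hYdef, Set.mem_iUnion] at hx ⊢
    obtain ⟨j, hj⟩ := hx
    exact ⟨k' - k + j, by rwa [show k + (k' - k + j) = k' + j by omega]⟩
  set Ainf : Set Ω := ⋂ k, Y k with hAinfdef
  have hAmem : ∀ i, MeasurableSet[mstar (E i)] Ainf := by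
    intro i
    have hEq : Ainf = ⋂ k, Y (i + k) := by
      apply subset_antisymm
      · exact Set.subset_iInter fun k => Set.iInter_subset Y (i + k)
      · exact Set.subset_iInter fun k =>
          (Set.iInter_subset (fun k' => Y (i + k')) k).trans (hYanti k (i + k) (by omega))
    rw [hEq]
    refine MeasurableSet.iInter fun k => MeasurableSet.iUnion fun j => ?_
    exact mstar_antitone hmono (show i ≤ i + k + j by omega) _ (hS (i + k + j))
  have hNall : ∀ᵐ ω ∂μ, ∀ n, g' n ω = (y : Ω → ℝ) ω :=
    ae_all_iff.2 fun n => (hg'_ae n).symm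
  have hAinf_ae : Ainf =ᵐ[μ] S 0 := by
    rw [Filter.eventuallyEq_set]
    filter_upwards [hNall] with ω hω
    constructor
    · intro h
      have h0 : ω ∈ Y 0 := Set.mem_iInter.1 h 0
      rw [hYdef, Set.mem_iUnion] at h0
      obtain ⟨j, hj⟩ := h0
      have : (0:ℕ) + j = j := by omega
      rw [this] at hj
      change 0 < g' j ω at hj
      change 0 < g' 0 ω
      rw [hω j, ← hω 0] at hj
      exact hj
    · intro h
      change 0 < g' 0 ω at h
      refine Set.mem_iInter.2 fun k => Set.mem_iUnion.2 ⟨0, ?_⟩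
      change 0 < g' (k + 0) ω
      rw [hω (k + 0), ← hω 0]
      exact h
  set slim : ℝ := ∫ ω, max (g' 0 ω) 0 ∂μ with hslimdef
  -- identification of `slim`
  have hAinfmeas : MeasurableSet Ainf := mstar_le _ _ (hAmem 0)
  have hchain : (P Ainf).toReal - (P' Ainf).toReal = slim := by
    have hχV : indicatorConstLp 2 hAinfmeas (measure_ne_top μ Ainf) (1:ℝ) ∈ ⨅ n, V n := by
      refine (Submodule.mem_iInf _).2 fun n => ?_
      rw [hVdef, mem_lpMeas_iff_aestronglyMeasurable]
      exact ⟨Ainf.indicator (fun _ => (1:ℝ)),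
        stronglyMeasurable_const.indicator (hAmem n), indicatorConstLp_coeFn⟩
    have hzero : (inner ℝ (fL - y) (indicatorConstLp 2 hAinfmeas (measure_ne_top μ Ainf) (1:ℝ)) : ℝ)
        = 0 := hy_orth _ hχV
    rw [real_inner_comm, L2.inner_indicatorConstLp_eq_setIntegral_inner ℝ (fL - y) hAinfmeas (1:ℝ)
      (measure_ne_top μ Ainf)] at hzero
    simp only [RCLike.inner_apply, starRingEnd_apply, star_one, one_mul, mul_one] at hzero
    have hcoe : (((fL - y : Lp ℝ 2 μ)) : Ω → ℝ) =ᵐ[μ] fun ω => f ω - g' 0 ω := by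
      filter_upwards [Lp.coeFn_sub fL y, hf2.coeFn_toLp, hg'_ae 0] with ω h1 h2 h3
      rw [h1]
      simp only [Pi.sub_apply]
      rw [h2, ← h3]
    rw [setIntegral_congr_ae hAinfmeas (hcoe.mono fun ω h _ => h)] at hzero
    rw [integral_sub (hf_int.integrableOn) ((hg'_int 0).integrableOn)] at hzero
    have h1 : ∫ ω in Ainf, f ω ∂μ = ∫ ω in Ainf, g' 0 ω ∂μ := by linarith
    have h2 : ∫ ω in Ainf, g' 0 ω ∂μ = ∫ ω in S 0, g' 0 ω ∂μ := setIntegral_congr_set hAinf_ae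
    have h3 : ∫ ω in S 0, g' 0 ω ∂μ = slim := by
      rw [hslimdef, ← integral_indicator (mstar_le _ _ (hS 0))]
      congr 1
      funext ω
      by_cases hω : ω ∈ S 0
      · rw [Set.indicator_of_mem hω]
        exact (max_eq_left (le_of_lt hω)).symm
      · rw [Set.indicator_of_notMem hω]
        change ¬ (0 < g' 0 ω) at hω
        exact (max_eq_right (not_lt.1 hω)).symm
    rw [← hsetf Ainf hAinfmeas, h1, h2, h3]
  -- convergence of `σfun` to `slim`
  have hconv : Tendsto σfun atTop (𝓝 slim) := by
    have hC : ∀ n, |σfun n - slim| ≤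
        (μ Set.univ ^ ((1:ℝ)/(1:ENNReal).toReal - 1/(2:ENNReal).toReal)).toReal
          * ‖pn n - y‖ := by
      intro n
      have hint1 : Integrable (fun ω => max (g n ω) 0) μ := (hg_int n).pos_part
      have hint2 : Integrable (fun ω => max (g' 0 ω) 0) μ := (hg'_int 0).pos_part
      have e1 : σfun n - slim = ∫ ω, (max (g n ω) 0 - max (g' 0 ω) 0) ∂μ := by
        rw [hσdef, hslimdef, integral_sub hint1 hint2]
      have e2 : |σfun n - slim| ≤ ∫ ω, |max (g n ω) 0 - max (g' 0 ω) 0| ∂μ := by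
        rw [e1, ← Real.norm_eq_abs]
        exact (norm_integral_le_integral_norm _).trans (le_of_eq (by simp [Real.norm_eq_abs]))
      have e3 : ∫ ω, |max (g n ω) 0 - max (g' 0 ω) 0| ∂μ ≤ ∫ ω, |g n ω - g' 0 ω| ∂μ := by
        refine integral_mono (hint1.sub hint2).abs ((hg_int n).sub (hg'_int 0)).abs ?_
        intro ω
        exact abs_max_sub_max_le_abs _ _ _
      have e4 : ∫ ω, |g n ω - g' 0 ω| ∂μ = ∫ ω, ‖((pn n - y : Lp ℝ 2 μ) : Ω → ℝ) ω‖ ∂μ := by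
        refine integral_congr_ae ?_
        filter_upwards [Lp.coeFn_sub (pn n) y, hg_ae n, hg'_ae 0] with ω h1 h2 h3
        rw [h1]
        simp only [Pi.sub_apply, Real.norm_eq_abs]
        rw [h2, h3]
      have e5 : ∫ ω, ‖((pn n - y : Lp ℝ 2 μ) : Ω → ℝ) ω‖ ∂μ =
          (eLpNorm (((pn n - y : Lp ℝ 2 μ)) : Ω → ℝ) 1 μ).toReal := by
        rw [integral_norm_eq_lintegral_enorm (Lp.aestronglyMeasurable _)]
        rw [eLpNorm_one_eq_lintegral_enorm]
      have e6 : eLpNorm (((pn n - y : Lp ℝ 2 μ)) : Ω → ℝ) 1 μ ≤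
          eLpNorm (((pn n - y : Lp ℝ 2 μ)) : Ω → ℝ) 2 μ *
          μ Set.univ ^ ((1:ℝ)/(1:ENNReal).toReal - 1/(2:ENNReal).toReal) :=
        eLpNorm_le_eLpNorm_mul_rpow_measure_univ one_le_two (Lp.aestronglyMeasurable _)
      have hne1 : eLpNorm (((pn n - y : Lp ℝ 2 μ)) : Ω → ℝ) 2 μ ≠ ⊤ := Lp.eLpNorm_ne_top _
      have hne2 : μ Set.univ ^ ((1:ℝ)/(1:ENNReal).toReal - 1/(2:ENNReal).toReal) ≠ ⊤ :=
        ENNReal.rpow_ne_top_of_nonneg (by norm_num) (measure_ne_top μ _)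
      have e7 : (eLpNorm (((pn n - y : Lp ℝ 2 μ)) : Ω → ℝ) 1 μ).toReal ≤
          (μ Set.univ ^ ((1:ℝ)/(1:ENNReal).toReal - 1/(2:ENNReal).toReal)).toReal
            * ‖pn n - y‖ := by
        have := ENNReal.toReal_mono (by exact ENNReal.mul_ne_top hne1 hne2) e6
        rw [ENNReal.toReal_mul] at this
        rw [Lp.norm_def]
        linarith [this]
      linarith [e2, e3, le_of_eq e4, le_of_eq e5, e7]
    have hnorm0 : Tendsto (fun n => ‖pn n - y‖) atTop (𝓝 0) := by
      have := tendsto_iff_norm_sub_tendsto_zero.1 hy_tendsto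
      exact this
    have hC0 : Tendsto (fun n =>
        (μ Set.univ ^ ((1:ℝ)/(1:ENNReal).toReal - 1/(2:ENNReal).toReal)).toReal
          * ‖pn n - y‖) atTop (𝓝 0) := by
      have h2 : Tendsto (fun k =>
          (μ Set.univ ^ ((1:ℝ)/(1:ENNReal).toReal - 1/(2:ENNReal).toReal)).toReal
            * ‖pn k - y‖) atTop
          (𝓝 ((μ Set.univ ^ ((1:ℝ)/(1:ENNReal).toReal - 1/(2:ENNReal).toReal)).toReal * 0)) :=
        hnorm0.const_mul _
      rw [mul_zero] at h2
      exact h2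
    have := squeeze_zero_norm (fun n => (Real.norm_eq_abs _).le.trans ((le_of_eq rfl).trans (hC n))) hC0
    exact tendsto_sub_nhds_zero_iff.1 this
  refine ⟨σfun, fun n => integral_nonneg (fun ω => le_max_right _ _), habs, slim, hconv,
    Ainf, ?_, hchain.symm⟩
  exact Estar_iUnion_mem.2 ⟨hAinfmeas, fun n => (hAmem n).2⟩

end Stmt14


namespace Stmt14
variable {Ω : Type*} [MeasurableSpace Ω]

lemma step_ex (Eu : Set (Ω × Ω)) (hEu : MeasurableSet Eu)
    (hd : StrongDualityPair Eu (Estar Eu)) (σ : ℝ) (hσ : 0 ≤ σ)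
    (α β : Measure Ω) [IsFiniteMeasure α] (heq : α Set.univ = β Set.univ)
    (hbound : ∀ A ∈ Estar Eu, |(α A).toReal - (β A).toReal| ≤ σ) :
    ∃ (K : Measure (Ω × Ω)) (α' β' : Measure Ω),
      α = α' + K.map Prod.fst ∧ β = β' + K.map Prod.snd ∧
      K Euᶜ = 0 ∧ α' Set.univ = β' Set.univ ∧ α' Set.univ ≤ ENNReal.ofReal σ ∧
      (∀ A ∈ Estar Eu, (K.map Prod.fst) A = (K.map Prod.snd) A) := by
  by_cases h0 : α Set.univ = 0
  · have hα : α = 0 := Measure.measure_univ_eq_zero.1 h0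
    have hβ : β = 0 := Measure.measure_univ_eq_zero.1 (heq ▸ h0)
    refine ⟨0, 0, 0, by simp [hα], by simp [hβ], by simp, rfl, by simp, by simp⟩
  · set t := α Set.univ with ht
    have htfin : t ≠ ⊤ := measure_ne_top α _
    set P₁ : Measure Ω := t⁻¹ • α with hP₁
    set P₂ : Measure Ω := t⁻¹ • β with hP₂
    haveI hprob₁ : IsProbabilityMeasure P₁ := by
      constructor
      rw [hP₁, Measure.smul_apply, smul_eq_mul, ENNReal.inv_mul_cancel h0 htfin]
    haveI hprob₂ : IsProbabilityMeasure P₂ := by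
      constructor
      rw [hP₂, Measure.smul_apply, smul_eq_mul, ← heq, ENNReal.inv_mul_cancel h0 htfin]
    obtain ⟨Q, ⟨hQprob, hfst, hsnd⟩, hsup, -⟩ := hd P₁ P₂ hprob₁ hprob₂
    set K : Measure (Ω × Ω) := t • Q.restrict Eu with hK
    set L : Measure (Ω × Ω) := t • Q.restrict Euᶜ with hL
    have hKL : K + L = t • Q := by
      rw [hK, hL, ← smul_add, Measure.restrict_add_restrict_compl hEu]
    have htQfst : (t • Q).map Prod.fst = α := by
      rw [Measure.map_smul, hfst, hP₁, smul_smul, ENNReal.mul_inv_cancel h0 htfin, one_smul]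
    have htQsnd : (t • Q).map Prod.snd = β := by
      rw [Measure.map_smul, hsnd, hP₂, smul_smul, ENNReal.mul_inv_cancel h0 htfin, one_smul]
    refine ⟨K, L.map Prod.fst, L.map Prod.snd, ?_, ?_, ?_, ?_, ?_, ?_⟩
    · rw [← htQfst, ← hKL, Measure.map_add _ _ measurable_fst, add_comm]
    · rw [← htQsnd, ← hKL, Measure.map_add _ _ measurable_snd, add_comm]
    · rw [hK, Measure.smul_apply, Measure.restrict_apply hEu.compl, Set.compl_inter_self,
        measure_empty, smul_eq_mul, mul_zero]
    · rw [Measure.map_apply measurable_fst MeasurableSet.univ,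
        Measure.map_apply measurable_snd MeasurableSet.univ]
      simp
    · -- mass bound
      have hQEc : Q Euᶜ = ENNReal.ofReal (⨆ A : Estar Eu, |(P₁ A.1).toReal - (P₂ A.1).toReal|) := by
        have h1 : (Q Euᶜ).toReal = 1 - (Q Eu).toReal := toReal_compl hEu
        rw [← hsup] at h1
        rw [← h1, ENNReal.ofReal_toReal (measure_ne_top Q _)]
      have htpos : 0 < t.toReal := ENNReal.toReal_pos h0 htfin
      have hsuple : (⨆ A : Estar Eu, |(P₁ A.1).toReal - (P₂ A.1).toReal|) ≤ t.toReal⁻¹ * σ := by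
        refine ciSup_le fun A => ?_
        have e1 : (P₁ A.1).toReal = t.toReal⁻¹ * (α A.1).toReal := by
          rw [hP₁, Measure.smul_apply, smul_eq_mul, ENNReal.toReal_mul, ENNReal.toReal_inv]
        have e2 : (P₂ A.1).toReal = t.toReal⁻¹ * (β A.1).toReal := by
          rw [hP₂, Measure.smul_apply, smul_eq_mul, ENNReal.toReal_mul, ENNReal.toReal_inv]
        rw [e1, e2, ← mul_sub, abs_mul, abs_of_nonneg (by positivity : (0:ℝ) ≤ t.toReal⁻¹)]
        exact mul_le_mul_of_nonneg_left (hbound A.1 A.2) (by positivity)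
      have hmass : (L.map Prod.fst) Set.univ = t * Q Euᶜ := by
        rw [Measure.map_apply measurable_fst MeasurableSet.univ, Set.preimage_univ, hL,
          Measure.smul_apply, smul_eq_mul, Measure.restrict_apply MeasurableSet.univ,
          Set.univ_inter]
      rw [hmass, hQEc]
      calc t * ENNReal.ofReal (⨆ A : Estar Eu, |(P₁ A.1).toReal - (P₂ A.1).toReal|)
          ≤ t * ENNReal.ofReal (t.toReal⁻¹ * σ) := by
            exact mul_le_mul_right (ENNReal.ofReal_le_ofReal hsuple) t
        _ = t * (t⁻¹ * ENNReal.ofReal σ) := by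
            rw [ENNReal.ofReal_mul (by positivity), ENNReal.ofReal_inv_of_pos
              (ENNReal.toReal_pos h0 htfin), ENNReal.ofReal_toReal htfin]
        _ = ENNReal.ofReal σ := by
            rw [← mul_assoc, ENNReal.mul_inv_cancel h0 htfin, one_mul]
    · intro A hA
      have hset : Prod.fst ⁻¹' A ∩ Eu = Prod.snd ⁻¹' A ∩ Eu := by
        ext p
        constructor
        · rintro ⟨h1, h2⟩; exact ⟨(hA.2 p h2).1 h1, h2⟩
        · rintro ⟨h1, h2⟩; exact ⟨(hA.2 p h2).2 h1, h2⟩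
      rw [Measure.map_apply measurable_fst hA.1, Measure.map_apply measurable_snd hA.1,
        hK, Measure.smul_apply, Measure.smul_apply, Measure.restrict_apply
          (measurable_fst hA.1), Measure.restrict_apply (measurable_snd hA.1), hset]

end Stmt14

open Stmt14 in
/-- a countable increasing union of strongly dualizable equivalence relations
is strongly dualizable. -/
theorem stmt14 {Ω : Type*} [MeasurableSpace Ω] (E : ℕ → Set (Ω × Ω))
    (hmono : Monotone E)
    (hEquiv : ∀ n, Equivalence (fun ω ω' : Ω => (ω, ω') ∈ E n))
    (hmeas : ∀ n, MeasurableSet (E n))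
    (hdual : ∀ n, StrongDualityPair (E n) (Estar (E n))) :
    StrongDualityPair (⋃ n, E n) (Estar (⋃ n, E n)) := by
  classical
  intro P P' hP hP'
  haveI := hP; haveI := hP'
  obtain ⟨σ, hσ0, hσb, slim, hσlim, Ainf, hAinfmem, hslim⟩ := sigma_exists E hmono P P'
  have hEU : MeasurableSet (⋃ n, E n) := MeasurableSet.iUnion hmeas
  -- the invariant carried along the recursion
  let Good : ℕ → Measure Ω × Measure Ω → Prop := fun n p =>
    p.1 Set.univ = p.2 Set.univ ∧ p.1 Set.univ ≠ ⊤ ∧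
      ∀ A ∈ Estar (E n), p.1 A + P' A = p.2 A + P A
  have hGood0 : Good 0 (P, P') :=
    ⟨by simp, by simp, fun A _ => by rw [add_comm]⟩
  have step : ∀ n (p : Measure Ω × Measure Ω), Good n p →
      ∃ q : (Measure Ω × Measure Ω) × Measure (Ω × Ω), Good (n+1) q.1 ∧
        p.1 = q.1.1 + q.2.map Prod.fst ∧ p.2 = q.1.2 + q.2.map Prod.snd ∧
        q.2 (E (n+1))ᶜ = 0 ∧ q.1.1 Set.univ ≤ ENNReal.ofReal (σ (n+1)) := by
    intro n p hp
    haveI : IsFiniteMeasure p.1 := ⟨lt_top_iff_ne_top.2 hp.2.1⟩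
    have hb : ∀ A ∈ Estar (E (n+1)), |(p.1 A).toReal - (p.2 A).toReal| ≤ σ (n+1) := by
      intro A hA
      have hA' : A ∈ Estar (E n) := Estar_anti (hmono (Nat.le_succ n)) hA
      have hJ := hp.2.2 A hA'
      have hfin1 : p.1 A ≠ ⊤ := ne_top_of_le_ne_top hp.2.1 (measure_mono (Set.subset_univ A))
      have hfin2 : p.2 A ≠ ⊤ := by
        refine ne_top_of_le_ne_top ?_ (measure_mono (Set.subset_univ A))
        rw [← hp.1]; exact hp.2.1
      have := congrArg ENNReal.toReal hJ
      rw [ENNReal.toReal_add hfin1 (measure_ne_top P' A),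
        ENNReal.toReal_add hfin2 (measure_ne_top P A)] at this
      have hres : (p.1 A).toReal - (p.2 A).toReal = (P A).toReal - (P' A).toReal := by linarith
      rw [hres]
      exact hσb (n+1) A hA
    obtain ⟨K, α', β', h1, h2, h3, h4, h5, h6⟩ := step_ex (E (n+1)) (hmeas _) (hdual _)
      (σ (n+1)) (hσ0 _) p.1 p.2 hp.1 hb
    have hα'fin : α' Set.univ ≠ ⊤ := ne_top_of_le_ne_top ENNReal.ofReal_ne_top h5
    refine ⟨((α', β'), K), ⟨h4, hα'fin, ?_⟩, h1, h2, h3, h5⟩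
    intro A hA
    have hA' : A ∈ Estar (E n) := Estar_anti (hmono (Nat.le_succ n)) hA
    have hJ := hp.2.2 A hA'
    have h1A : p.1 A = α' A + (K.map Prod.fst) A := by rw [h1, Measure.add_apply]
    have h2A : p.2 A = β' A + (K.map Prod.snd) A := by rw [h2, Measure.add_apply]
    have hc : (K.map Prod.fst) A ≠ ⊤ := by
      refine ne_top_of_le_ne_top hp.2.1 ?_
      rw [h1A] at *
      calc (K.map Prod.fst) A ≤ p.1 A := by rw [h1, Measure.add_apply]; exact le_add_self
        _ ≤ p.1 Set.univ := measure_mono (Set.subset_univ A)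
    have hkey : (α' A + P' A) + (K.map Prod.fst) A = (β' A + P A) + (K.map Prod.fst) A := by
      have e1 : (α' A + P' A) + (K.map Prod.fst) A = (α' A + (K.map Prod.fst) A) + P' A := by
        ring
      have e2 : (β' A + P A) + (K.map Prod.fst) A = (β' A + (K.map Prod.snd) A) + P A := by
        rw [h6 A hA]; ring
      rw [e1, e2, ← h1A, ← h2A]
      exact hJ
    exact WithTop.add_right_cancel hc hkey
  -- construct the sequence by recursion with choice
  let T : ℕ → Type _ := fun n => {p : Measure Ω × Measure Ω // Good n p}
  let next : ∀ n, T n → T (n+1) × Measure (Ω × Ω) := fun n x =>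
    ⟨⟨(Classical.choose (step n x.1 x.2)).1, (Classical.choose_spec (step n x.1 x.2)).1⟩,
      (Classical.choose (step n x.1 x.2)).2⟩
  let F : ∀ n, T n := fun n =>
    Nat.rec (motive := T) ⟨(P, P'), hGood0⟩ (fun k x => (next k x).1) n
  let K : ℕ → Measure (Ω × Ω) := fun n => (next n (F n)).2
  let α : ℕ → Measure Ω := fun n => (F n).1.1
  let β : ℕ → Measure Ω := fun n => (F n).1.2
  have hGood : ∀ n, Good n (α n, β n) := fun n => (F n).2
  have hrel : ∀ n, α n = α (n+1) + (K n).map Prod.fst ∧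
      β n = β (n+1) + (K n).map Prod.snd ∧
      (K n) (E (n+1))ᶜ = 0 ∧ α (n+1) Set.univ ≤ ENNReal.ofReal (σ (n+1)) := by
    intro n
    have hs := Classical.choose_spec (step n (F n).1 (F n).2)
    exact ⟨hs.2.1, hs.2.2.1, hs.2.2.2.1, hs.2.2.2.2⟩
  have hα0 : α 0 = P := rfl
  have hβ0 : β 0 = P' := rfl
  -- partial sum identities
  have hpart : ∀ n, ∀ A : Set Ω, MeasurableSet A →
      (∑ k ∈ Finset.range n, ((K k).map Prod.fst) A) + α n A = P A := by
    intro n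
    induction n with
    | zero => intro A _; simp [hα0]
    | succ n ih =>
      intro A hA
      have h1 := (hrel n).1
      have : α n A = α (n+1) A + ((K n).map Prod.fst) A := by
        rw [h1, Measure.add_apply]
      rw [Finset.sum_range_succ]
      rw [← ih A hA, this]
      ring
  have hpart' : ∀ n, ∀ A : Set Ω, MeasurableSet A →
      (∑ k ∈ Finset.range n, ((K k).map Prod.snd) A) + β n A = P' A := by
    intro n
    induction n with
    | zero => intro A _; simp [hβ0]
    | succ n ih =>
      intro A hA
      have h1 := (hrel n).2.1
      have : β n A = β (n+1) A + ((K n).map Prod.snd) A := by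
        rw [h1, Measure.add_apply]
      rw [Finset.sum_range_succ]
      rw [← ih A hA, this]
      ring
  -- the total kept measure
  set M : Measure (Ω × Ω) := Measure.sum K with hMdef
  set ν₁ : Measure Ω := M.map Prod.fst with hν₁def
  set ν₂ : Measure Ω := M.map Prod.snd with hν₂def
  have hν₁A : ∀ A : Set Ω, MeasurableSet A → ν₁ A = ∑' k, ((K k).map Prod.fst) A := by
    intro A hA
    rw [hν₁def, Measure.map_apply measurable_fst hA, hMdef,
      Measure.sum_apply _ (measurable_fst hA)]
    exact tsum_congr fun k => (Measure.map_apply measurable_fst hA).symm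
  have hν₂A : ∀ A : Set Ω, MeasurableSet A → ν₂ A = ∑' k, ((K k).map Prod.snd) A := by
    intro A hA
    rw [hν₂def, Measure.map_apply measurable_snd hA, hMdef,
      Measure.sum_apply _ (measurable_snd hA)]
    exact tsum_congr fun k => (Measure.map_apply measurable_snd hA).symm
  have hν₁P : ν₁ ≤ P := by
    rw [Measure.le_iff]
    intro A hA
    rw [hν₁A A hA, ENNReal.tsum_eq_iSup_nat]
    refine iSup_le fun n => ?_
    rw [← hpart n A hA]
    exact le_self_add
  have hν₂P' : ν₂ ≤ P' := by
    rw [Measure.le_iff]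
    intro A hA
    rw [hν₂A A hA, ENNReal.tsum_eq_iSup_nat]
    refine iSup_le fun n => ?_
    rw [← hpart' n A hA]
    exact le_self_add
  haveI : IsFiniteMeasure ν₁ := isFiniteMeasure_of_le P hν₁P
  haveI : IsFiniteMeasure ν₂ := isFiniteMeasure_of_le P' hν₂P'
  set αinf : Measure Ω := P - ν₁ with hαinf
  set βinf : Measure Ω := P' - ν₂ with hβinf
  have hαinf_add : αinf + ν₁ = P := Measure.sub_add_cancel_of_le hν₁P
  have hβinf_add : βinf + ν₂ = P' := Measure.sub_add_cancel_of_le hν₂P'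
  have hνuniv : ν₁ Set.univ = ν₂ Set.univ := by
    rw [hν₁def, hν₂def, Measure.map_apply measurable_fst MeasurableSet.univ,
      Measure.map_apply measurable_snd MeasurableSet.univ]
    simp
  set ℓ : ENNReal := αinf Set.univ with hℓ
  have hℓ' : βinf Set.univ = ℓ := by
    have h1 : αinf Set.univ + ν₁ Set.univ = 1 := by
      rw [← Measure.add_apply, hαinf_add, measure_univ]
    have h2 : βinf Set.univ + ν₂ Set.univ = 1 := by
      rw [← Measure.add_apply, hβinf_add, measure_univ]
    rw [hνuniv] at h1
    have hfin : ν₂ Set.univ ≠ ⊤ := measure_ne_top _ _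
    rw [hℓ]
    exact WithTop.add_right_cancel hfin (h2.trans h1.symm)
  have hℓfin : ℓ ≠ ⊤ := measure_ne_top _ _
  have hℓle1 : ℓ ≤ 1 := by
    rw [hℓ]
    calc αinf Set.univ ≤ P Set.univ := by
          rw [← hαinf_add, Measure.add_apply]; exact le_self_add
      _ = 1 := measure_univ
  -- mass bound for ℓ
  have hℓb : ∀ n, ℓ ≤ ENNReal.ofReal (σ (n+1)) := by
    intro n
    have h1 : (1 : ENNReal) ≤ ν₁ Set.univ + ENNReal.ofReal (σ (n+1)) := by
      have h2 := hpart (n+1) Set.univ MeasurableSet.univ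
      have h3 : (∑ k ∈ Finset.range (n+1), ((K k).map Prod.fst) Set.univ) ≤ ν₁ Set.univ := by
        rw [hν₁A _ MeasurableSet.univ]
        exact ENNReal.sum_le_tsum _
      calc (1 : ENNReal) = P Set.univ := measure_univ.symm
        _ = (∑ k ∈ Finset.range (n+1), ((K k).map Prod.fst) Set.univ)
            + α (n+1) Set.univ := h2.symm
        _ ≤ ν₁ Set.univ + ENNReal.ofReal (σ (n+1)) := add_le_add h3 (hrel n).2.2.2
    show αinf Set.univ ≤ ENNReal.ofReal (σ (n+1))
    have hfin : ν₁ Set.univ ≠ ⊤ := measure_ne_top _ _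
    have h4 : αinf Set.univ + ν₁ Set.univ = 1 := by
      rw [← Measure.add_apply, hαinf_add, measure_univ]
    have h5 : αinf Set.univ + ν₁ Set.univ ≤ ν₁ Set.univ + ENNReal.ofReal (σ (n+1)) :=
      h4.le.trans h1
    calc αinf Set.univ = αinf Set.univ + ν₁ Set.univ - ν₁ Set.univ := by
          rw [ENNReal.add_sub_cancel_right hfin]
      _ ≤ ν₁ Set.univ + ENNReal.ofReal (σ (n+1)) - ν₁ Set.univ := by
          exact tsub_le_tsub h5 (le_refl _)
      _ = ENNReal.ofReal (σ (n+1)) := by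
          rw [add_comm, ENNReal.add_sub_cancel_right hfin]
  have hℓslim : ℓ.toReal ≤ slim := by
    have h1 : ∀ n, ℓ.toReal ≤ σ (n+1) := fun n =>
      ENNReal.toReal_le_of_le_ofReal (hσ0 (n+1)) (hℓb n)
    have h2 : Filter.Tendsto (fun n => σ (n+1)) Filter.atTop (nhds slim) :=
      hσlim.comp (Filter.tendsto_add_atTop_nat 1)
    exact ge_of_tendsto' h2 fun n => h1 n
  -- the garbage coupling of the leftovers
  have hD : ∃ D : Measure (Ω × Ω), D.map Prod.fst = αinf ∧ D.map Prod.snd = βinf ∧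
      D Set.univ = ℓ := by
    by_cases h0 : ℓ = 0
    · have hα : αinf = 0 := Measure.measure_univ_eq_zero.1 (hℓ ▸ h0)
      have hβ : βinf = 0 := Measure.measure_univ_eq_zero.1 (by rw [hℓ']; exact h0)
      exact ⟨0, by simp [hα], by simp [hβ], by simp [h0]⟩
    · refine ⟨ℓ⁻¹ • (αinf.prod βinf), ?_, ?_, ?_⟩
      · rw [Measure.map_smul, Measure.map_fst_prod, hℓ', smul_smul,
          ENNReal.inv_mul_cancel h0 hℓfin, one_smul]
      · rw [Measure.map_smul, Measure.map_snd_prod, ← hℓ, smul_smul,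
          ENNReal.inv_mul_cancel h0 hℓfin, one_smul]
      · rw [Measure.smul_apply, smul_eq_mul, ← Set.univ_prod_univ, Measure.prod_prod, hℓ',
          ← hℓ, ← mul_assoc, ENNReal.inv_mul_cancel h0 hℓfin, one_mul]
  obtain ⟨D, hDfst, hDsnd, hDuniv⟩ := hD
  set Q : Measure (Ω × Ω) := M + D with hQdef
  have hQfst : Q.map Prod.fst = P := by
    rw [hQdef, Measure.map_add _ _ measurable_fst, hDfst, ← hν₁def, add_comm, hαinf_add]
  have hQsnd : Q.map Prod.snd = P' := by
    rw [hQdef, Measure.map_add _ _ measurable_snd, hDsnd, ← hν₂def, add_comm, hβinf_add]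
  haveI hQprob : IsProbabilityMeasure Q := by
    constructor
    have h1 : Q Set.univ = (Q.map Prod.fst) Set.univ := by
      rw [Measure.map_apply measurable_fst MeasurableSet.univ, Set.preimage_univ]
    rw [h1, hQfst, measure_univ]
  have hcoup : IsCoupling Q P P' := ⟨hQprob, hQfst, hQsnd⟩
  have hKE : ∀ k, (K k) (⋃ n, E n) = (K k) Set.univ := by
    intro k
    refine le_antisymm (measure_mono (Set.subset_univ _)) ?_
    have h3 := (hrel k).2.2.1
    have h1 : (K k) (E (k+1)) + (K k) (E (k+1))ᶜ = (K k) Set.univ :=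
      measure_add_measure_compl (hmeas (k+1))
    calc (K k) Set.univ = (K k) (E (k+1)) + (K k) (E (k+1))ᶜ := h1.symm
      _ = (K k) (E (k+1)) := by rw [h3, add_zero]
      _ ≤ (K k) (⋃ n, E n) := measure_mono (Set.subset_iUnion E (k+1))
  have hME : M (⋃ n, E n) = ν₁ Set.univ := by
    rw [hMdef, Measure.sum_apply _ hEU, hν₁A _ MeasurableSet.univ]
    refine tsum_congr fun k => ?_
    rw [hKE k, Measure.map_apply measurable_fst MeasurableSet.univ, Set.preimage_univ]
  have hQE_lb : ν₁ Set.univ ≤ Q (⋃ n, E n) := by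
    rw [← hME, hQdef, Measure.add_apply]
    exact le_self_add
  have hν₁r : (ν₁ Set.univ).toReal = 1 - ℓ.toReal := by
    have h4 : αinf Set.univ + ν₁ Set.univ = 1 := by
      rw [← Measure.add_apply, hαinf_add, measure_univ]
    have := congrArg ENNReal.toReal h4
    rw [ENNReal.toReal_add (measure_ne_top _ _) (measure_ne_top _ _), ENNReal.toReal_one] at this
    have hℓt : (αinf Set.univ).toReal = ℓ.toReal := by rw [← hℓ]
    linarith
  have hQEr : 1 - (Q (⋃ n, E n)).toReal ≤ ℓ.toReal := by
    have h5 : (ν₁ Set.univ).toReal ≤ (Q (⋃ n, E n)).toReal :=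
      ENNReal.toReal_mono (measure_ne_top Q _) hQE_lb
    linarith [hν₁r]
  have hbdd : BddAbove (Set.range fun A : (Estar (⋃ n, E n)) =>
      |(P A.1).toReal - (P' A.1).toReal|) := by
    refine ⟨1, ?_⟩
    rintro x ⟨A, rfl⟩
    have h1 : (P A.1).toReal ≤ 1 := by
      have := ENNReal.toReal_mono ENNReal.one_ne_top (prob_le_one (μ := P) (s := A.1))
      simpa using this
    have h2 : (P' A.1).toReal ≤ 1 := by
      have := ENNReal.toReal_mono ENNReal.one_ne_top (prob_le_one (μ := P') (s := A.1))
      simpa using this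
    have h3 : (0:ℝ) ≤ (P A.1).toReal := ENNReal.toReal_nonneg
    have h4 : (0:ℝ) ≤ (P' A.1).toReal := ENNReal.toReal_nonneg
    rw [abs_le]
    constructor <;> linarith
  have hub : (⨆ A : (Estar (⋃ n, E n)), |(P A.1).toReal - (P' A.1).toReal|)
      ≤ 1 - (Q (⋃ n, E n)).toReal :=
    ciSup_le fun A => coupling_bound hcoup hEU A.2
  have hlb : 1 - (Q (⋃ n, E n)).toReal ≤
      (⨆ A : (Estar (⋃ n, E n)), |(P A.1).toReal - (P' A.1).toReal|) := by
    have h1 : slim ≤ |(P Ainf).toReal - (P' Ainf).toReal| := by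
      rw [hslim]; exact le_abs_self _
    have h2 : |(P Ainf).toReal - (P' Ainf).toReal| ≤
        (⨆ A : (Estar (⋃ n, E n)), |(P A.1).toReal - (P' A.1).toReal|) :=
      le_ciSup hbdd (⟨Ainf, hAinfmem⟩ : (Estar (⋃ n, E n)))
    linarith [hℓslim, hQEr]
  refine ⟨Q, hcoup, le_antisymm hub hlb, ?_⟩
  intro Q' hQ'
  haveI := hQ'.1
  have h3 : (⨆ A : (Estar (⋃ n, E n)), |(P A.1).toReal - (P' A.1).toReal|)
      ≤ 1 - (Q' (⋃ n, E n)).toReal :=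
    ciSup_le fun A => coupling_bound hQ' hEU A.2
  have h4 : (Q' (⋃ n, E n)).toReal ≤ (Q (⋃ n, E n)).toReal := by
    have h5 := le_antisymm hub hlb
    linarith [h3, h5]
  exact (ENNReal.toReal_le_toReal (measure_ne_top Q' _) (measure_ne_top Q _)).1 h4
end

section
/- There exists a probability measure Q on Ω₀ × Ω₀ (with Ω₀ = {0,1}^ℕ) such that Q(Ã) ∈ {0,1} for every Ã in the product σ-algebra 𝒯 ⊗ 𝒯 of the tail σ-algebra with itself, while Q(E₀) = 1/2, where E₀ is the eventual-equality relation. Consequently, E₀ is not measurable with respect to 𝒯 ⊗ 𝒯 (E₀ is not basic). -/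
open MeasureTheory

/-- The eventual-equality relation on binary sequences. -/
def Ezero : Set ((ℕ → Bool) × (ℕ → Bool)) :=
  {p | ∃ n, ∀ k ≥ n, p.1 k = p.2 k}

/-- The tail σ-algebra on binary sequences. -/
def tailAlg : MeasurableSpace (ℕ → Bool) :=
  ⨅ n : ℕ, MeasurableSpace.comap (fun (ω : ℕ → Bool) (k : ℕ) => ω (n + k)) inferInstance




namespace Stmt17Aux

local instance boolAddGroup : AddCommGroup Bool where
  add := xor
  zero := false
  neg := id
  add_assoc := by decide
  zero_add := by decide
  add_zero := by decide
  neg_add_cancel := by decide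
  add_comm := by decide
  nsmul := nsmulRec
  zsmul := zsmulRec

local instance : IsTopologicalAddGroup Bool :=
  { continuous_add := continuous_of_discreteTopology
    continuous_neg := continuous_of_discreteTopology }

abbrev O : Type := ℕ → Bool

lemma add_apply (x y : O) (k : ℕ) : (x + y) k = xor (x k) (y k) := rfl

noncomputable def nu : Measure O := Measure.addHaarMeasure (⊤ : TopologicalSpace.PositiveCompacts O)

instance : nu.IsAddLeftInvariant := by unfold nu; infer_instance

instance : IsProbabilityMeasure nu := by
  constructor
  have := Measure.addHaarMeasure_self (K₀ := (⊤ : TopologicalSpace.PositiveCompacts O))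
  simpa [nu, TopologicalSpace.PositiveCompacts.coe_top] using this

/-- indicator sequence at `a` -/
def delta (a : ℕ) : O := fun k => decide (k = a)

lemma halving (a : ℕ) (c : Bool) {B : Set O} (hB : MeasurableSet B)
    (hinv : (fun ω => delta a + ω) ⁻¹' B = B) :
    nu ({ω : O | ω a = c} ∩ B) = nu B / 2 := by
  have hpre : (fun ω => delta a + ω) ⁻¹' ({ω : O | ω a = c} ∩ B)
      = {ω : O | ω a = !c} ∩ B := by
    rw [Set.preimage_inter, hinv]
    congr 1
    ext ω
    simp only [Set.mem_preimage, Set.mem_setOf_eq, add_apply]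
    have : delta a a = true := by simp [delta]
    rw [this]
    cases c <;> cases h : ω a <;> simp
  have hkey : nu ({ω : O | ω a = !c} ∩ B) = nu ({ω : O | ω a = c} ∩ B) := by
    rw [← hpre, measure_preimage_add]
  have hsetof : ∀ c' : Bool, {ω : O | ω a = c'} = (fun ω : O => ω a) ⁻¹' {c'} := by
    intro c'; ext ω; simp
  have hmeasc : ∀ c' : Bool, MeasurableSet ({ω : O | ω a = c'} ∩ B) := fun c' => by
    rw [hsetof]
    exact ((measurable_pi_apply a) (MeasurableSet.singleton c')).inter hB
  have hdisj : Disjoint ({ω : O | ω a = c} ∩ B) ({ω : O | ω a = !c} ∩ B) := by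
    refine Set.disjoint_left.mpr ?_
    rintro ω ⟨h1, _⟩ ⟨h2, _⟩
    simp only [Set.mem_setOf_eq] at h1 h2
    rw [h1] at h2; cases c <;> simp at h2
  have hunion : ({ω : O | ω a = c} ∩ B) ∪ ({ω : O | ω a = !c} ∩ B) = B := by
    rw [← Set.union_inter_distrib_right]
    have : {ω : O | ω a = c} ∪ {ω : O | ω a = !c} = Set.univ := by
      ext ω; simp only [Set.mem_union, Set.mem_setOf_eq, Set.mem_univ, iff_true]
      cases c <;> cases h : ω a <;> simp
    rw [this, Set.univ_inter]
  have hsum : nu ({ω : O | ω a = c} ∩ B) + nu ({ω : O | ω a = !c} ∩ B) = nu B := by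
    rw [← measure_union hdisj (hmeasc _), hunion]
  rw [hkey] at hsum
  rw [ENNReal.eq_div_iff two_ne_zero ENNReal.ofNat_ne_top]
  rw [two_mul, hsum]

lemma cylinder_indep (S : Finset ℕ) (t : ℕ → Set Bool) :
    nu (⋂ i ∈ S, (fun ω : O => ω i) ⁻¹' t i) = ∏ i ∈ S, nu ((fun ω : O => ω i) ⁻¹' t i) := by
  classical
  induction S using Finset.induction_on with
  | empty => simp
  | @insert a S ha IH =>
    rw [Finset.set_biInter_insert, Finset.prod_insert ha]
    set B := ⋂ i ∈ S, (fun ω : O => ω i) ⁻¹' t i with hBdef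
    have hBmeas : MeasurableSet B :=
      MeasurableSet.biInter (S.countable_toSet) fun i _ => (measurable_pi_apply i) trivial
    have hBinv : (fun ω => delta a + ω) ⁻¹' B = B := by
      rw [hBdef, Set.preimage_iInter₂]
      refine Set.iInter₂_congr fun i hi => ?_
      ext ω
      simp only [Set.mem_preimage, add_apply]
      have : delta a i = false := by
        simp only [delta, decide_eq_false_iff_not]
        rintro rfl; exact ha hi
      rw [this, Bool.false_xor]
    have hta : t a = ∅ ∨ t a = {false} ∨ t a = {true} ∨ t a = Set.univ := by
      by_cases h1 : false ∈ t a <;> by_cases h2 : true ∈ t a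
      · right; right; right; ext b; cases b <;> simp [h1, h2]
      · right; left; ext b; cases b <;> simp [h1, h2]
      · right; right; left; ext b; cases b <;> simp [h1, h2]
      · left; ext b; cases b <;> simp [h1, h2]
    have hsingle : ∀ c : Bool, (fun ω : O => ω a) ⁻¹' ({c} : Set Bool) = {ω : O | ω a = c} := by
      intro c; ext ω; simp
    have hhalf : ∀ c : Bool, nu {ω : O | ω a = c} = 1 / 2 := by
      intro c
      have := halving a c MeasurableSet.univ (by simp)
      rw [Set.inter_univ, measure_univ] at this
      exact this
    rcases hta with h | h | h | h
    · rw [h]; simp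
    · rw [h, hsingle, halving a false hBmeas hBinv, IH, hhalf false]
      rw [ENNReal.div_eq_inv_mul, one_div]
    · rw [h, hsingle, halving a true hBmeas hBinv, IH, hhalf true]
      rw [ENNReal.div_eq_inv_mul, one_div]
    · rw [h, Set.preimage_univ, Set.univ_inter, measure_univ, one_mul]; exact IH

end Stmt17Aux

namespace Stmt17Aux

open ProbabilityTheory

lemma coordAlg_le (n : ℕ) :
    MeasurableSpace.comap (fun ω : O => ω n) inferInstance ≤ (inferInstance : MeasurableSpace O) :=
  measurable_iff_comap_le.mp (measurable_pi_apply n)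

lemma indep : iIndep (fun n => MeasurableSpace.comap (fun ω : O => ω n) inferInstance) nu := by
  rw [iIndep_iff]
  intro S f hf
  classical
  have h' : ∀ i ∈ S, ∃ t : Set Bool, (fun ω : O => ω i) ⁻¹' t = f i := by
    intro i hi
    rcases MeasurableSpace.measurableSet_comap.mp (hf i hi) with ⟨t, _, ht⟩
    exact ⟨t, ht⟩
  choose t ht using h'
  set t' : ℕ → Set Bool := fun i => if h : i ∈ S then t i h else Set.univ with ht'def
  have hft : ∀ i ∈ S, f i = (fun ω : O => ω i) ⁻¹' t' i := by
    intro i hi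
    have : t' i = t i hi := by simp [ht'def, dif_pos hi]
    rw [this, ht i hi]
  calc nu (⋂ i ∈ S, f i) = nu (⋂ i ∈ S, (fun ω : O => ω i) ⁻¹' t' i) := by
        congr 1; exact Set.iInter₂_congr hft
    _ = ∏ i ∈ S, nu ((fun ω : O => ω i) ⁻¹' t' i) := cylinder_indep S t'
    _ = ∏ i ∈ S, nu (f i) := Finset.prod_congr rfl fun i hi => by rw [← hft i hi]

lemma tail_le_limsup :
    tailAlg ≤ Filter.limsup (fun n => MeasurableSpace.comap (fun ω : O => ω n) inferInstance)
      Filter.atTop := by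
  rw [Filter.limsup_eq_iInf_iSup_of_nat']
  refine le_iInf fun n => ?_
  refine iInf_le_of_le n ?_
  show MeasurableSpace.comap (fun (ω : O) (k : ℕ) => ω (n + k))
        (⨆ m, (inferInstance : MeasurableSpace Bool).comap (fun f : O => f m)) ≤ _
  rw [MeasurableSpace.comap_iSup]
  refine iSup_le fun m => ?_
  rw [MeasurableSpace.comap_comp]
  refine le_iSup_of_le m ?_
  have : ((fun f : O => f m) ∘ fun (ω : O) (k : ℕ) => ω (n + k)) = fun ω : O => ω (m + n) := by
    funext ω; simp [Function.comp, Nat.add_comm]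
  rw [this]

lemma nu_zero_one {T : Set O} (hT : MeasurableSet[tailAlg] T) : nu T = 0 ∨ nu T = 1 :=
  measure_zero_or_one_of_measurableSet_limsup_atTop coordAlg_le indep (tail_le_limsup T hT)

/-- coordinatewise bit flip -/
def bflip : O → O := fun ω k => !(ω k)

lemma bflip_eq : bflip = fun ω => (fun _ => true) + ω := by
  funext ω k
  rw [add_apply]
  simp only [bflip]
  cases ω k <;> rfl

lemma nu_preimage_bflip (A : Set O) : nu (bflip ⁻¹' A) = nu A := by
  rw [bflip_eq]; exact measure_preimage_add nu _ A

lemma bflip_borel : Measurable bflip :=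
  measurable_pi_lambda _ fun k => measurable_from_top.comp (measurable_pi_apply k)

lemma bflip_tail : @Measurable O O tailAlg tailAlg bflip := by
  rw [measurable_iff_comap_le]
  unfold tailAlg
  calc MeasurableSpace.comap bflip
        (⨅ n, MeasurableSpace.comap (fun (ω : O) (k : ℕ) => ω (n + k)) inferInstance)
      ≤ ⨅ n, MeasurableSpace.comap bflip
          (MeasurableSpace.comap (fun (ω : O) (k : ℕ) => ω (n + k)) inferInstance) :=
        le_iInf fun n => (MeasurableSpace.comap_mono (iInf_le _ n))
    _ ≤ ⨅ n, MeasurableSpace.comap (fun (ω : O) (k : ℕ) => ω (n + k)) inferInstance := by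
        refine iInf_mono fun n => ?_
        rw [MeasurableSpace.comap_comp]
        have : ((fun (ω : O) (k : ℕ) => ω (n + k)) ∘ bflip)
            = bflip ∘ (fun (ω : O) (k : ℕ) => ω (n + k)) := rfl
        rw [this, ← MeasurableSpace.comap_comp]
        exact MeasurableSpace.comap_mono (measurable_iff_comap_le.mp bflip_borel)

lemma tail_le_borel : tailAlg ≤ (inferInstance : MeasurableSpace O) := by
  refine le_trans (iInf_le _ 0) ?_
  exact measurable_iff_comap_le.mp (measurable_pi_lambda _ fun k => measurable_pi_apply (0 + k))

lemma nu_inter_one {T T' : Set O} (hT : MeasurableSet T) (hT' : MeasurableSet T')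
    (h1 : nu T = 1) (h2 : nu T' = 1) : nu (T ∩ T') = 1 := by
  have hc1 : nu Tᶜ = 0 := by
    rw [measure_compl hT (measure_ne_top _ _), h1, measure_univ, tsub_self]
  have hc2 : nu T'ᶜ = 0 := by
    rw [measure_compl hT' (measure_ne_top _ _), h2, measure_univ, tsub_self]
  have hc : nu (T ∩ T')ᶜ = 0 := by
    rw [Set.compl_inter]
    exact le_antisymm (le_trans (measure_union_le _ _) (by rw [hc1, hc2, add_zero])) zero_le
  have := measure_add_measure_compl (μ := nu) (hT.inter hT')
  rw [hc, add_zero, measure_univ] at this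
  exact this

end Stmt17Aux

namespace Stmt17Aux

noncomputable def Qm : Measure (O × O) :=
  (1/2 : ENNReal) • nu.map (fun ω => (ω, ω)) + (1/2 : ENNReal) • nu.map (fun ω => (ω, bflip ω))

lemma d_meas : Measurable fun ω : O => (ω, ω) := measurable_id.prodMk measurable_id
lemma g_meas : Measurable fun ω : O => (ω, bflip ω) := measurable_id.prodMk bflip_borel

lemma Qm_apply {A : Set (O × O)} (hA : MeasurableSet A) :
    Qm A = 1/2 * nu ((fun ω => (ω, ω)) ⁻¹' A) + 1/2 * nu ((fun ω => (ω, bflip ω)) ⁻¹' A) := by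
  simp [Qm, Measure.add_apply, Measure.smul_apply, smul_eq_mul,
    Measure.map_apply d_meas hA, Measure.map_apply g_meas hA]

instance : IsProbabilityMeasure Qm := by
  constructor
  rw [Qm_apply MeasurableSet.univ]
  simp only [Set.preimage_univ, measure_univ, mul_one]
  exact ENNReal.add_halves 1

lemma prodtail_le : tailAlg.prod tailAlg ≤ (inferInstance : MeasurableSpace (O × O)) :=
  sup_le ((MeasurableSpace.comap_mono tail_le_borel).trans
      (measurable_iff_comap_le.mp measurable_fst))
    ((MeasurableSpace.comap_mono tail_le_borel).trans
      (measurable_iff_comap_le.mp measurable_snd))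

lemma Qm_rect {T T' : Set O} (hT : MeasurableSet[tailAlg] T) (hT' : MeasurableSet[tailAlg] T') :
    Qm (T ×ˢ T') = 0 ∨ Qm (T ×ˢ T') = 1 := by
  have hTb : MeasurableSet T := tail_le_borel _ hT
  have hT'b : MeasurableSet T' := tail_le_borel _ hT'
  have hAB : MeasurableSet (T ×ˢ T') := hTb.prod hT'b
  have hd : (fun ω : O => (ω, ω)) ⁻¹' (T ×ˢ T') = T ∩ T' := by
    ext ω; simp [Set.mem_prod]
  have hg : (fun ω : O => (ω, bflip ω)) ⁻¹' (T ×ˢ T') = T ∩ bflip ⁻¹' T' := by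
    ext ω; simp [Set.mem_prod]
  rw [Qm_apply hAB, hd, hg]
  rcases nu_zero_one hT with h1 | h1
  · left
    have e1 : nu (T ∩ T') = 0 :=
      le_antisymm ((measure_mono Set.inter_subset_left).trans h1.le) zero_le
    have e2 : nu (T ∩ bflip ⁻¹' T') = 0 :=
      le_antisymm ((measure_mono Set.inter_subset_left).trans h1.le) zero_le
    rw [e1, e2]; simp
  · rcases nu_zero_one hT' with h2 | h2
    · left
      have e1 : nu (T ∩ T') = 0 :=
        le_antisymm ((measure_mono Set.inter_subset_right).trans h2.le) zero_le
      have e2 : nu (T ∩ bflip ⁻¹' T') = 0 := by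
        refine le_antisymm (le_trans (measure_mono Set.inter_subset_right) ?_) zero_le
        rw [nu_preimage_bflip, h2]
      rw [e1, e2]; simp
    · right
      have e1 : nu (T ∩ T') = 1 := nu_inter_one hTb hT'b h1 h2
      have e2 : nu (T ∩ bflip ⁻¹' T') = 1 := by
        refine nu_inter_one hTb (bflip_borel hT'b) h1 ?_
        rw [nu_preimage_bflip]; exact h2
      rw [e1, e2, mul_one, ENNReal.add_halves]

lemma Qm_zero_one : ∀ A : Set (O × O), MeasurableSet[tailAlg.prod tailAlg] A →
    Qm A = 0 ∨ Qm A = 1 := by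
  have hgen : (tailAlg.prod tailAlg) = MeasurableSpace.generateFrom
      (Set.image2 (· ×ˢ ·) {s : Set O | MeasurableSet[tailAlg] s}
        {t : Set O | MeasurableSet[tailAlg] t}) :=
    (@generateFrom_prod O O tailAlg tailAlg).symm
  intro A hA
  refine MeasurableSpace.induction_on_inter (m := tailAlg.prod tailAlg)
    (C := fun A _ => Qm A = 0 ∨ Qm A = 1) hgen (@isPiSystem_prod O O tailAlg tailAlg) ?_ ?_ ?_ ?_ A hA
  · left; simp
  · rintro t ⟨T, hT, T', hT', rfl⟩; exact Qm_rect hT hT'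
  · intro t ht hQt
    have htb : MeasurableSet t := prodtail_le _ ht
    rcases hQt with h | h
    · right; rw [measure_compl htb (measure_ne_top _ _), h, measure_univ, tsub_zero]
    · left; rw [measure_compl htb (measure_ne_top _ _), h, measure_univ, tsub_self]
  · intro f hdisj hmeas hC
    by_cases hall : ∀ i, Qm (f i) = 0
    · left
      rw [measure_iUnion hdisj (fun i => prodtail_le _ (hmeas i))]
      simp [hall]
    · right
      push_neg at hall
      obtain ⟨i, hi⟩ := hall
      have h1 : Qm (f i) = 1 := (hC i).resolve_left hi
      refine le_antisymm prob_le_one ?_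
      calc (1 : ENNReal) = Qm (f i) := h1.symm
        _ ≤ Qm (⋃ j, f j) := measure_mono (Set.subset_iUnion f i)

lemma Ezero_borel : MeasurableSet Ezero := by
  have he : Ezero = ⋃ n : ℕ, ⋂ k : ℕ, ⋂ (_ : k ≥ n), {p : O × O | p.1 k = p.2 k} := by
    ext p; simp [Ezero, Set.mem_iInter]
  rw [he]
  refine MeasurableSet.iUnion fun n => MeasurableSet.iInter fun k =>
    MeasurableSet.iInter fun _ => ?_
  exact measurableSet_eq_fun (by fun_prop) (by fun_prop)

lemma Qm_Ezero : Qm Ezero = 1/2 := by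
  rw [Qm_apply Ezero_borel]
  have hd : (fun ω : O => (ω, ω)) ⁻¹' Ezero = Set.univ := by
    ext ω
    simp only [Set.mem_preimage, Set.mem_univ, iff_true]
    exact ⟨0, fun k _ => rfl⟩
  have hg : (fun ω : O => (ω, bflip ω)) ⁻¹' Ezero = ∅ := by
    ext ω
    simp only [Set.mem_preimage, Set.mem_empty_iff_false, iff_false]
    rintro ⟨n, hn⟩
    have := hn n le_rfl
    simp [bflip] at this
  rw [hd, hg, measure_univ, measure_empty, mul_one, mul_zero, add_zero]

end Stmt17Aux


/-- there is a probability measure `Q` on `Ω₀ × Ω₀` which is `{0,1}`-valued on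
the product σ-algebra `𝒯 ⊗ 𝒯` of the tail σ-algebra with itself, yet `Q(E₀) = 1/2`.
Consequently `E₀` is not `𝒯 ⊗ 𝒯`-measurable, i.e. `E₀` is not basic. -/
theorem stmt17 :
    (∃ Q : Measure ((ℕ → Bool) × (ℕ → Bool)), IsProbabilityMeasure Q ∧
      (∀ A : Set ((ℕ → Bool) × (ℕ → Bool)),
        MeasurableSet[tailAlg.prod tailAlg] A → Q A = 0 ∨ Q A = 1) ∧
      Q Ezero = 1 / 2) ∧
    ¬ MeasurableSet[tailAlg.prod tailAlg] Ezero := by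
  constructor
  · exact ⟨Stmt17Aux.Qm, inferInstance, Stmt17Aux.Qm_zero_one, Stmt17Aux.Qm_Ezero⟩
  · intro h
    rcases Stmt17Aux.Qm_zero_one Ezero h with h0 | h1
    · rw [Stmt17Aux.Qm_Ezero] at h0
      norm_num at h0
    · rw [Stmt17Aux.Qm_Ezero] at h1
      rw [ENNReal.div_eq_one_iff (by norm_num) (by norm_num)] at h1
      norm_num at h1
end
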